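/- Let u ∈ G(ℝ⁺), where ℝ⁺ = (0,∞), let α ∈ ℝ, and suppose u(λx) = λ^α u(x) holds in G(ℝ⁺) for every real λ > 0. Then u(x) = c x^α in G(ℝ⁺) for some generalized complex number c; i.e. there is a moderate net (c_ε) of complex numbers such that the net (u_ε(x) − c_ε x^α)_ε is negligible on ℝ⁺. -/

import Mathlib

open Set Filter Topology MeasureTheory

noncomputable section

variable {E F : Type*} [NormedAddCommGroup E] [NormedSpace ℝ E]
  [NormedAddCommGroup F] [NormedSpace ℝ F]

/-- A net of smooth functions, indexed by `ε ∈ (0,1]`, is *moderate* on the open set `Ω`: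
all iterated derivatives are `O(ε^{-N})` on compact subsets, for some `N`. -/
def IsModerate (Ω : Set E) (u : ℝ → E → F) : Prop :=
  (∀ ε ∈ Set.Ioc (0:ℝ) 1, ContDiffOn ℝ (⊤:ℕ∞) (u ε) Ω) ∧
  ∀ K : Set E, IsCompact K → K ⊆ Ω → ∀ n : ℕ, ∃ N : ℕ, ∃ C : ℝ, ∃ ε₀ : ℝ, 0 < ε₀ ∧
    ∀ ε : ℝ, 0 < ε → ε < ε₀ → ∀ x ∈ K,
      ‖iteratedFDerivWithin ℝ n (u ε) Ω x‖ ≤ C * ε ^ (-(N:ℤ))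

/-- A net of smooth functions is *negligible* on `Ω`: all iterated derivatives are `O(ε^m)`
on compact subsets, for every `m`. -/
def IsNegligible (Ω : Set E) (u : ℝ → E → F) : Prop :=
  (∀ ε ∈ Set.Ioc (0:ℝ) 1, ContDiffOn ℝ (⊤:ℕ∞) (u ε) Ω) ∧
  ∀ K : Set E, IsCompact K → K ⊆ Ω → ∀ n : ℕ, ∀ m : ℕ, ∃ C : ℝ, ∃ ε₀ : ℝ, 0 < ε₀ ∧
    ∀ ε : ℝ, 0 < ε → ε < ε₀ → ∀ x ∈ K,
      ‖iteratedFDerivWithin ℝ n (u ε) Ω x‖ ≤ C * ε ^ m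

/-- A net of numbers is *moderate*: `O(ε^{-N})` for some `N`. -/
def NumModerate (c : ℝ → F) : Prop :=
  ∃ N : ℕ, ∃ C : ℝ, ∃ ε₀ : ℝ, 0 < ε₀ ∧ ∀ ε : ℝ, 0 < ε → ε < ε₀ → ‖c ε‖ ≤ C * ε ^ (-(N:ℤ))

/-- A net of numbers is *negligible*: `O(ε^m)` for every `m`. -/
def NumNegligible (c : ℝ → F) : Prop :=
  ∀ m : ℕ, ∃ C : ℝ, ∃ ε₀ : ℝ, 0 < ε₀ ∧ ∀ ε : ℝ, 0 < ε → ε < ε₀ → ‖c ε‖ ≤ C * ε ^ m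

/-- A net of points is a representative of a *compactly supported generalized point* of `Ω`. -/
def CompactlySupportedPoint (Ω : Set E) (a : ℝ → E) : Prop :=
  ∃ K : Set E, IsCompact K ∧ K ⊆ Ω ∧ ∃ ε₀ : ℝ, 0 < ε₀ ∧ ∀ ε : ℝ, 0 < ε → ε < ε₀ → a ε ∈ K

/-- The partial order on generalized reals, on representatives: `a ≤ b` iff `b - a` has a
representative with all terms nonnegative, i.e. `a ε + n ε ≤ b ε` for some negligible `n`. -/
def TildeLe (a b : ℝ → ℝ) : Prop :=
  ∃ n : ℝ → ℝ, NumNegligible n ∧ ∀ ε ∈ Set.Ioc (0:ℝ) 1, a ε + n ε ≤ b ε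

/-- Strict order `a << b`: `b - a` is strictly positive, i.e. `b ε - a ε > ε^m` for some `m`
and all small `ε`. -/
def TildeLt (a b : ℝ → ℝ) : Prop :=
  ∃ m : ℕ, ∃ ε₀ : ℝ, 0 < ε₀ ∧ ∀ ε : ℝ, 0 < ε → ε < ε₀ → a ε + ε ^ m < b ε

/-!
In logarithmic coordinates `f ε t = exp (-α t) • u ε (exp t)` the homogeneity hypothesis says
that `f ε (t + s) - f ε t` is negligible, uniformly for `t` in compact sets, for each fixed `s`;
the constants depend on `s`, so only finitely many shifts can be used. With the shifts `1` and `φ`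
(the golden ratio) every `φ⁻¹ ^ k` is reached by a walk of `O(φ ^ k)` steps that stays in a fixed
interval, because `φ⁻¹ ^ (k + 2) = φ⁻¹ ^ k - φ⁻¹ ^ (k + 1)`. Walking along a grid of mesh
`δ = ε ^ M` and using the moderate Lipschitz bound of `f ε` between grid points shows that
`f ε t - f ε 0`, hence `u ε x - u ε 1 * x ^ α`, is negligible at order zero. A moderate net that
is negligible at order zero is negligible, by the interpolation inequality
`h ‖g'‖ ≤ 2 sup ‖g‖ + h² sup ‖g''‖`.
-/

open Real goldenRatio

section ShiftBound

variable {G : Type*} [SeminormedAddCommGroup G] {f : ℝ → G} {A B : ℝ}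

def ShiftBound (f : ℝ → G) (A B s c : ℝ) : Prop :=
  ∀ t ∈ Icc A B, t + s ∈ Icc A B → ‖f (t + s) - f t‖ ≤ c

namespace ShiftBound

variable {s a b c d : ℝ}

theorem mono (h : ShiftBound f A B s c) (hcd : c ≤ d) : ShiftBound f A B s d :=
  fun t ht hts => (h t ht hts).trans hcd

theorem add (ha : ShiftBound f A B a c) (hb : ShiftBound f A B b d) (ha0 : 0 ≤ a) (hb0 : 0 ≤ b) :
    ShiftBound f A B (a + b) (c + d) := by
  intro t ht htab
  rw [← add_assoc] at htab ⊢
  have hta : t + a ∈ Icc A B := ⟨by linarith [ht.1], by linarith [htab.2]⟩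
  calc ‖f (t + a + b) - f t‖ = ‖(f (t + a) - f t) + (f (t + a + b) - f (t + a))‖ := by
        rw [add_comm (f (t + a) - f t), sub_add_sub_cancel]
    _ ≤ c + d := norm_add_le_of_le (ha t ht hta) (hb _ hta htab)

theorem natCast_mul (h : ShiftBound f A B s c) (hs : 0 ≤ s) :
    ∀ n : ℕ, ShiftBound f A B (n * s) (n * c)
  | 0 => fun t _ _ => by simp
  | n + 1 => by simpa [add_mul] using (h.natCast_mul hs n).add h (by positivity) hs

/-- If the path through `t + a` leaves `[A, B]`, the one through `t - b` does not. -/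
theorem sub (ha : ShiftBound f A B a c) (hb : ShiftBound f A B b d) (hb0 : 0 ≤ b)
    (hba : b ≤ a) (hlen : a + b ≤ B - A) : ShiftBound f A B (a - b) (c + d) := by
  intro t ht ht'
  by_cases hta : t + a ≤ B
  · have hta' : t + a ∈ Icc A B := ⟨by linarith [ht.1], hta⟩
    have e : t + (a - b) + b = t + a := by ring
    have hb' : ‖f (t + a) - f (t + (a - b))‖ ≤ d := by
      simpa only [e] using hb _ ht' (by rwa [e])
    calc ‖f (t + (a - b)) - f t‖ = ‖(f (t + a) - f t) - (f (t + a) - f (t + (a - b)))‖ := by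
          congr 1; abel
      _ ≤ c + d := norm_sub_le_of_le (ha t ht hta') hb'
  · have htb : t - b ∈ Icc A B := ⟨by linarith, by linarith [ht.2]⟩
    have e : t - b + a = t + (a - b) := by ring
    have e' : t - b + b = t := by ring
    have ha' : ‖f (t + (a - b)) - f (t - b)‖ ≤ c := by
      simpa only [e] using ha _ htb (by rwa [e])
    have hb' : ‖f t - f (t - b)‖ ≤ d := by
      simpa only [e'] using hb _ htb (by rwa [e'])
    calc ‖f (t + (a - b)) - f t‖ = ‖(f (t + (a - b)) - f (t - b)) - (f t - f (t - b))‖ := by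
          congr 1; abel
      _ ≤ c + d := norm_sub_le_of_le ha' hb'

/-- Costs add along `φ⁻¹ ^ (k + 2) = φ⁻¹ ^ k - φ⁻¹ ^ (k + 1)`, so they grow like the Fibonacci
numbers. -/
theorem goldenRatio_inv_pow (h1 : ShiftBound f A B 1 d) (hφ : ShiftBound f A B φ d)
    (hd : 0 ≤ d) (hAB : 3 ≤ B - A) (k : ℕ) : ShiftBound f A B (φ⁻¹ ^ k) (2 * φ ^ k * d) := by
  have hinv : φ⁻¹ = φ - 1 := by rw [inv_goldenRatio, ← one_sub_goldenConj]; ring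
  have hinv0 : 0 ≤ φ⁻¹ := inv_nonneg.2 goldenRatio_pos.le
  have hinv1 : φ⁻¹ ≤ 1 := inv_le_one_of_one_le₀ one_lt_goldenRatio.le
  suffices ∀ k, ShiftBound f A B (φ⁻¹ ^ k) (2 * φ ^ k * d) ∧
      ShiftBound f A B (φ⁻¹ ^ (k + 1)) (2 * φ ^ (k + 1) * d) from (this k).1
  intro k
  induction k with
  | zero =>
    refine ⟨by simpa [two_mul] using h1.mono (le_add_of_nonneg_left hd), ?_⟩
    rw [pow_one, pow_one, hinv]
    refine (hφ.sub h1 zero_le_one one_lt_goldenRatio.le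
      (by linarith [goldenRatio_lt_two])).mono ?_
    nlinarith [one_lt_goldenRatio]
  | succ k ih =>
    have hk : φ⁻¹ ^ k ≤ 1 := pow_le_one₀ hinv0 hinv1
    have hk' : φ⁻¹ ^ (k + 1) ≤ φ⁻¹ ^ k := pow_le_pow_of_le_one hinv0 hinv1 k.le_succ
    refine ⟨ih.2, ?_⟩
    convert ih.1.sub ih.2 (pow_nonneg hinv0 _) hk' (by linarith) using 1
    · rw [hinv]
      linear_combination (φ - 1) ^ k * goldenRatio_sq
    · linear_combination (2 * φ ^ k * d) * goldenRatio_sq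

theorem norm_sub_le_of_lipschitz {L x y : ℝ} (h : ShiftBound f A B s c) (hs : 0 < s)
    (hc : 0 ≤ c) (hL : 0 ≤ L) (hLip : ∀ x ∈ Icc A B, ∀ y ∈ Icc A B, ‖f y - f x‖ ≤ L * |y - x|)
    (hx : x ∈ Icc A B) (hy : y ∈ Icc A B) (hxy : x ≤ y) :
    ‖f y - f x‖ ≤ L * s + (y - x) / s * c := by
  set j := ⌊(y - x) / s⌋₊
  have hj : j ≤ (y - x) / s := Nat.floor_le (div_nonneg (sub_nonneg.2 hxy) hs.le)
  have hjs : j * s ≤ y - x := (le_div_iff₀ hs).1 hj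
  have hjs' : y - x < j * s + s := by
    have := (div_lt_iff₀ hs).1 (Nat.lt_floor_add_one ((y - x) / s)); linarith
  have hz : x + j * s ∈ Icc A B :=
    ⟨by linarith [hx.1, mul_nonneg j.cast_nonneg hs.le], by linarith [hy.2]⟩
  calc ‖f y - f x‖ ≤ ‖f y - f (x + j * s)‖ + ‖f (x + j * s) - f x‖ :=
        norm_sub_le_norm_sub_add_norm_sub _ _ _
    _ ≤ L * |y - (x + j * s)| + j * c :=
        add_le_add (hLip _ hz y hy) (h.natCast_mul hs.le j x hx hz)
    _ ≤ L * s + (y - x) / s * c := by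
        gcongr
        rw [abs_of_nonneg (by linarith)]; linarith

end ShiftBound

theorem norm_sub_le_of_shiftBound_one_goldenRatio {D L δ x y : ℝ} (h1 : ShiftBound f A B 1 D)
    (hφ : ShiftBound f A B φ D) (hD : 0 ≤ D) (hAB : 3 ≤ B - A) (hL : 0 ≤ L)
    (hLip : ∀ x ∈ Icc A B, ∀ y ∈ Icc A B, ‖f y - f x‖ ≤ L * |y - x|) (hδ : 0 < δ) (hδ1 : δ ≤ 1)
    (hx : x ∈ Icc A B) (hy : y ∈ Icc A B) : ‖f y - f x‖ ≤ L * δ + 8 * (B - A) * D / δ ^ 2 := by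
  wlog hxy : x ≤ y generalizing x y
  · rw [norm_sub_rev]; exact this hy hx (le_of_not_ge hxy)
  obtain ⟨n, hn, hn'⟩ := exists_nat_pow_near ((one_le_inv₀ hδ).2 hδ1) one_lt_goldenRatio
  have hPδ : φ ^ (n + 1) ≤ 2 / δ := by
    rw [le_div_iff₀ hδ, pow_succ']
    calc φ * φ ^ n * δ ≤ φ * δ⁻¹ * δ := by gcongr
      _ ≤ 2 := by rw [mul_assoc, inv_mul_cancel₀ hδ.ne', mul_one]; exact goldenRatio_lt_two.le
  have hshift : ShiftBound f A B (φ ^ (n + 1))⁻¹ (2 * φ ^ (n + 1) * D) := by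
    simpa only [inv_pow] using h1.goldenRatio_inv_pow hφ hD hAB (n + 1)
  have hP : 0 < φ ^ (n + 1) := pow_pos goldenRatio_pos _
  calc ‖f y - f x‖ ≤ L * (φ ^ (n + 1))⁻¹ + (y - x) / (φ ^ (n + 1))⁻¹ * (2 * φ ^ (n + 1) * D) :=
        hshift.norm_sub_le_of_lipschitz (inv_pos.2 hP) (by positivity) hL hLip hx hy hxy
    _ = L * (φ ^ (n + 1))⁻¹ + 2 * (y - x) * D * (φ ^ (n + 1)) ^ 2 := by field_simp
    _ ≤ L * δ + 2 * (B - A) * D * (2 / δ) ^ 2 := by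
        gcongr
        exacts [(inv_lt_of_inv_lt₀ hδ hn').le, hy.2, hx.1]
    _ = L * δ + 8 * (B - A) * D / δ ^ 2 := by ring

end ShiftBound

section Nets

variable {X Y V 𝕜 : Type*} [SeminormedAddCommGroup V] {g g₁ g₂ : ℝ → X → V} {K : Set X}

/- Order-zero bounds on `K` in constant-free form: a constant is absorbed into one more power
of `ε`. -/
def IsNegligibleOn (g : ℝ → X → V) (K : Set X) : Prop :=
  ∀ m : ℕ, ∀ᶠ ε in 𝓝[>] (0:ℝ), ∀ x ∈ K, ‖g ε x‖ ≤ ε ^ m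

def IsModerateOn (g : ℝ → X → V) (K : Set X) : Prop :=
  ∃ N : ℕ, ∀ᶠ ε in 𝓝[>] (0:ℝ), ∀ x ∈ K, ‖g ε x‖ * ε ^ N ≤ 1

theorem eventually_nhdsGT_zero_iff {p : ℝ → Prop} :
    (∀ᶠ ε in 𝓝[>] (0:ℝ), p ε) ↔ ∃ ε₀, 0 < ε₀ ∧ ∀ ε, 0 < ε → ε < ε₀ → p ε := by
  simp [(nhdsGT_basis (0:ℝ)).eventually_iff, and_imp]

theorem eventually_mul_le_one (C : ℝ) : ∀ᶠ ε in 𝓝[>] (0:ℝ), C * ε ≤ 1 :=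
  ((continuous_const_mul C).tendsto' 0 0 (mul_zero C)).mono_left nhdsWithin_le_nhds
    |>.eventually (eventually_le_nhds one_pos)

theorem isNegligibleOn_of_forall_exists_bound
    (h : ∀ m : ℕ, ∃ C, ∀ᶠ ε in 𝓝[>] (0:ℝ), ∀ x ∈ K, ‖g ε x‖ ≤ C * ε ^ m) :
    IsNegligibleOn g K := by
  intro m
  obtain ⟨C, hC⟩ := h (m + 1)
  filter_upwards [hC, eventually_mul_le_one C, self_mem_nhdsWithin] with ε hε hCε (hε0 : 0 < ε)
  intro x hx
  calc ‖g ε x‖ ≤ C * ε ^ (m + 1) := hε x hx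
    _ = C * ε * ε ^ m := by ring
    _ ≤ ε ^ m := mul_le_of_le_one_left (by positivity) hCε

theorem isModerateOn_of_exists_bound
    (h : ∃ N : ℕ, ∃ C, ∀ᶠ ε in 𝓝[>] (0:ℝ), ∀ x ∈ K, ‖g ε x‖ ≤ C * ε ^ (-(N:ℤ))) :
    IsModerateOn g K := by
  obtain ⟨N, C, hC⟩ := h
  refine ⟨N + 1, ?_⟩
  filter_upwards [hC, eventually_mul_le_one C, self_mem_nhdsWithin] with ε hε hCε (hε0 : 0 < ε)
  intro x hx
  calc ‖g ε x‖ * ε ^ (N + 1) ≤ C * ε ^ (-(N:ℤ)) * ε ^ (N + 1) := by gcongr; exact hε x hx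
    _ = C * ε := by rw [zpow_neg, zpow_natCast, pow_succ]; field_simp
    _ ≤ 1 := hCε

namespace IsNegligibleOn

theorem comp {K' : Set Y} {σ : Y → X} (h : IsNegligibleOn g K) (hσ : MapsTo σ K' K) :
    IsNegligibleOn (fun ε y => g ε (σ y)) K' :=
  fun m => (h m).mono fun _ hε _ hy => hε _ (hσ hy)

theorem congr_norm {g' : ℝ → X → Y} [SeminormedAddCommGroup Y] (h : IsNegligibleOn g K)
    (heq : ∀ᶠ ε in 𝓝[>] (0:ℝ), ∀ x ∈ K, ‖g ε x‖ = ‖g' ε x‖) : IsNegligibleOn g' K :=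
  fun m => by filter_upwards [h m, heq] with ε hε heqε x hx using heqε x hx ▸ hε x hx

theorem smul [NormedField 𝕜] [NormedSpace 𝕜 V] {a : ℝ → X → 𝕜} (ha : IsModerateOn a K)
    (hg : IsNegligibleOn g K) : IsNegligibleOn (fun ε x => a ε x • g ε x) K := by
  intro m
  obtain ⟨N, hN⟩ := ha
  filter_upwards [hN, hg (m + N), self_mem_nhdsWithin] with ε ha hg (hε : 0 < ε) x hx
  calc ‖a ε x • g ε x‖ ≤ ‖a ε x‖ * ε ^ (m + N) :=
        (norm_smul_le _ _).trans (by gcongr; exact hg x hx)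
    _ = ‖a ε x‖ * ε ^ N * ε ^ m := by ring
    _ ≤ ε ^ m := mul_le_of_le_one_left (by positivity) (ha x hx)

end IsNegligibleOn

namespace IsModerateOn

theorem comp {K' : Set Y} {σ : Y → X} (h : IsModerateOn g K) (hσ : MapsTo σ K' K) :
    IsModerateOn (fun ε y => g ε (σ y)) K' :=
  let ⟨N, hN⟩ := h
  ⟨N, hN.mono fun _ hε _ hy => hε _ (hσ hy)⟩

theorem congr_norm {g' : ℝ → X → Y} [SeminormedAddCommGroup Y] (h : IsModerateOn g K)
    (heq : ∀ᶠ ε in 𝓝[>] (0:ℝ), ∀ x ∈ K, ‖g ε x‖ = ‖g' ε x‖) : IsModerateOn g' K :=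
  let ⟨N, hN⟩ := h
  ⟨N, by filter_upwards [hN, heq] with ε hε heqε x hx using heqε x hx ▸ hε x hx⟩

theorem of_forall_norm_le {b : X → V} {M : ℝ} (h : ∀ x ∈ K, ‖b x‖ ≤ M) :
    IsModerateOn (fun _ x => b x) K := by
  refine ⟨1, ?_⟩
  filter_upwards [eventually_mul_le_one M, self_mem_nhdsWithin] with ε hM (hε : 0 < ε) x hx
  calc ‖b x‖ * ε ^ 1 ≤ M * ε := by rw [pow_one]; gcongr; exact h x hx
    _ ≤ 1 := hM

theorem _root_.ContinuousOn.isModerateOn [TopologicalSpace X] {b : X → V} (hb : ContinuousOn b K)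
    (hK : IsCompact K) : IsModerateOn (fun _ x => b x) K :=
  let ⟨_, hM⟩ := hK.exists_bound_of_continuousOn hb
  of_forall_norm_le hM

theorem neg (h : IsModerateOn g K) : IsModerateOn (fun ε x => -g ε x) K :=
  h.congr_norm (.of_forall fun _ _ _ => (norm_neg _).symm)

theorem add (h₁ : IsModerateOn g₁ K) (h₂ : IsModerateOn g₂ K) :
    IsModerateOn (fun ε x => g₁ ε x + g₂ ε x) K := by
  obtain ⟨N₁, hN₁⟩ := h₁
  obtain ⟨N₂, hN₂⟩ := h₂
  refine ⟨N₁ + N₂ + 1, ?_⟩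
  filter_upwards [hN₁, hN₂, eventually_mul_le_one 2, Ioc_mem_nhdsGT one_pos] with
    ε h₁ h₂ h2ε hε x hx
  have hε0 : 0 ≤ ε := hε.1.le
  calc ‖g₁ ε x + g₂ ε x‖ * ε ^ (N₁ + N₂ + 1)
      ≤ ‖g₁ ε x‖ * ε ^ N₁ * (ε ^ N₂ * ε) + ‖g₂ ε x‖ * ε ^ N₂ * (ε ^ N₁ * ε) := by
        grw [norm_add_le]
        exact le_of_eq (by ring)
    _ ≤ 1 * (1 * ε) + 1 * (1 * ε) := by
        gcongr
        exacts [h₁ x hx, pow_le_one₀ hε0 hε.2, h₂ x hx, pow_le_one₀ hε0 hε.2]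
    _ ≤ 1 := by linarith

theorem sub (h₁ : IsModerateOn g₁ K) (h₂ : IsModerateOn g₂ K) :
    IsModerateOn (fun ε x => g₁ ε x - g₂ ε x) K := by
  simpa only [sub_eq_add_neg] using h₁.add h₂.neg

theorem smul [NormedField 𝕜] [NormedSpace 𝕜 V] {a : ℝ → X → 𝕜} (ha : IsModerateOn a K)
    (hg : IsModerateOn g K) : IsModerateOn (fun ε x => a ε x • g ε x) K := by
  obtain ⟨N₁, hN₁⟩ := ha
  obtain ⟨N₂, hN₂⟩ := hg
  refine ⟨N₁ + N₂, ?_⟩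
  filter_upwards [hN₁, hN₂, self_mem_nhdsWithin] with ε h₁ h₂ (hε : 0 < ε) x hx
  calc ‖a ε x • g ε x‖ * ε ^ (N₁ + N₂) ≤ ‖a ε x‖ * ε ^ N₁ * (‖g ε x‖ * ε ^ N₂) := by
        rw [pow_add, mul_mul_mul_comm]; gcongr; exact norm_smul_le _ _
    _ ≤ 1 * 1 := by gcongr; exacts [h₁ x hx, h₂ x hx]
    _ = 1 := one_mul 1

end IsModerateOn

theorem NumModerate.isModerateOn {W : Type*} [NormedAddCommGroup W] {c : ℝ → W}
    (hc : NumModerate c) :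
    IsModerateOn (fun ε (_ : X) => c ε) K := by
  obtain ⟨N, C, ε₀, hε₀, h⟩ := hc
  exact isModerateOn_of_exists_bound ⟨N, C, eventually_nhdsGT_zero_iff.2
    ⟨ε₀, hε₀, fun ε h₁ h₂ _ _ => h ε h₁ h₂⟩⟩

end Nets

theorem IsModerate.isModerateOn {Ω K : Set E} {u : ℝ → E → F} (hu : IsModerate Ω u)
    (hK : IsCompact K) (hKΩ : K ⊆ Ω) (n : ℕ) :
    IsModerateOn (fun ε => iteratedFDerivWithin ℝ n (u ε) Ω) K :=
  let ⟨N, C, ε₀, hε₀, h⟩ := hu.2 K hK hKΩ n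
  isModerateOn_of_exists_bound ⟨N, C, eventually_nhdsGT_zero_iff.2 ⟨ε₀, hε₀, h⟩⟩

theorem IsModerate.of_isModerateOn {Ω : Set E} {u : ℝ → E → F}
    (hu : ∀ ε ∈ Ioc (0:ℝ) 1, ContDiffOn ℝ (⊤:ℕ∞) (u ε) Ω)
    (h : ∀ K, IsCompact K → K ⊆ Ω → ∀ n : ℕ,
      IsModerateOn (fun ε => iteratedFDerivWithin ℝ n (u ε) Ω) K) :
    IsModerate Ω u := by
  refine ⟨hu, fun K hK hKΩ n => ?_⟩
  obtain ⟨N, hN⟩ := h K hK hKΩ n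
  obtain ⟨ε₀, hε₀, hε⟩ := eventually_nhdsGT_zero_iff.1 hN
  refine ⟨N, 1, ε₀, hε₀, fun ε h₁ h₂ x hx => ?_⟩
  rw [zpow_neg, zpow_natCast, one_mul, ← one_div, le_div_iff₀ (by positivity)]
  exact hε ε h₁ h₂ x hx

theorem IsModerate.numModerate {Ω : Set E} {u : ℝ → E → F} (hu : IsModerate Ω u) {x : E}
    (hx : x ∈ Ω) : NumModerate fun ε => u ε x :=
  let ⟨N, C, ε₀, hε₀, h⟩ := hu.2 {x} isCompact_singleton (singleton_subset_iff.2 hx) 0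
  ⟨N, C, ε₀, hε₀, fun ε h₁ h₂ => by simpa using h ε h₁ h₂ x rfl⟩

theorem IsNegligible.isNegligibleOn {Ω K : Set E} {u : ℝ → E → F} (hu : IsNegligible Ω u)
    (hK : IsCompact K) (hKΩ : K ⊆ Ω) : IsNegligibleOn u K :=
  isNegligibleOn_of_forall_exists_bound fun m =>
    let ⟨C, ε₀, hε₀, h⟩ := hu.2 K hK hKΩ 0 m
    ⟨C, eventually_nhdsGT_zero_iff.2 ⟨ε₀, hε₀, fun ε h₁ h₂ x hx => by simpa using h ε h₁ h₂ x hx⟩⟩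

theorem IsNegligible.of_isNegligibleOn {Ω : Set E} {u : ℝ → E → F}
    (hu : ∀ ε ∈ Ioc (0:ℝ) 1, ContDiffOn ℝ (⊤:ℕ∞) (u ε) Ω)
    (h : ∀ K, IsCompact K → K ⊆ Ω → ∀ n : ℕ,
      IsNegligibleOn (fun ε => iteratedFDerivWithin ℝ n (u ε) Ω) K) :
    IsNegligible Ω u :=
  ⟨hu, fun K hK hKΩ n m =>
    let ⟨ε₀, hε₀, hε⟩ := eventually_nhdsGT_zero_iff.1 (h K hK hKΩ n m)
    ⟨1, ε₀, hε₀, fun ε h₁ h₂ x hx => (one_mul (ε ^ m)).symm ▸ hε ε h₁ h₂ x hx⟩⟩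

theorem IsModerate.sub_mul {Ω : Set E} (hΩ : UniqueDiffOn ℝ Ω) {u : ℝ → E → ℂ} {c : ℝ → ℂ}
    {ρ : E → ℂ} (hu : IsModerate Ω u) (hc : NumModerate c) (hρ : ContDiffOn ℝ (⊤:ℕ∞) ρ Ω) :
    IsModerate Ω (fun ε x => u ε x - c ε * ρ x) := by
  refine .of_isModerateOn (fun ε hε => (hu.1 ε hε).sub (contDiffOn_const.mul hρ))
    fun K hK hKΩ n => ?_
  have hn : ((n : ℕ∞) : WithTop ℕ∞) ≤ ((⊤ : ℕ∞) : WithTop ℕ∞) := by exact_mod_cast le_top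
  have hρK := ((hρ.continuousOn_iteratedFDerivWithin hn hΩ).mono hKΩ).isModerateOn hK
  refine ((hu.isModerateOn hK hKΩ n).sub (hc.isModerateOn.smul hρK)).congr_norm ?_
  filter_upwards [Ioc_mem_nhdsGT one_pos] with ε hε x hx
  have hun := (hu.1 ε hε).of_le hn x (hKΩ hx)
  have hρn := hρ.of_le hn x (hKΩ hx)
  rw [show (fun x => u ε x - c ε * ρ x) = u ε - c ε • ρ from rfl,
    iteratedFDerivWithin_sub_apply (g := c ε • ρ) hun (hρn.const_smul (c ε)) hΩ (hKΩ hx),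
    iteratedFDerivWithin_const_smul_apply hρn hΩ (hKΩ hx)]

theorem mul_norm_deriv_le_of_bounds {g g' g'' : ℝ → F} {x h S M : ℝ} (hh : 0 < h)
    (hg : ∀ y ∈ Icc x (x + h), HasDerivAt g (g' y) y)
    (hg' : ∀ y ∈ Icc x (x + h), HasDerivAt g' (g'' y) y)
    (hS : ∀ y ∈ Icc x (x + h), ‖g y‖ ≤ S) (hM : ∀ y ∈ Icc x (x + h), ‖g'' y‖ ≤ M) :
    h * ‖g' x‖ ≤ 2 * S + M * h ^ 2 := by
  have hx : x ∈ Icc x (x + h) := left_mem_Icc.2 (by linarith)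
  have hxh : x + h ∈ Icc x (x + h) := right_mem_Icc.2 (by linarith)
  have hM0 : 0 ≤ M := (norm_nonneg _).trans (hM x hx)
  have hlip : ∀ y ∈ Icc x (x + h), ‖g' y - g' x‖ ≤ M * h := fun y hy => by
    calc ‖g' y - g' x‖ ≤ M * ‖y - x‖ :=
          (convex_Icc x (x + h)).norm_image_sub_le_of_norm_hasDerivWithin_le
            (fun z hz => (hg' z hz).hasDerivWithinAt) hM hx hy
      _ ≤ M * h := by
          rw [Real.norm_of_nonneg (by linarith [hy.1])]; gcongr; linarith [hy.2]
  have hrem : ‖g (x + h) - g x - h • g' x‖ ≤ M * h * h := by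
    have hderiv : ∀ y ∈ Icc x (x + h), HasDerivWithinAt (fun y => g y - (y - x) • g' x)
        (g' y - g' x) (Icc x (x + h)) y := fun y hy => by
      convert ((hg y hy).sub (((hasDerivAt_id y).sub_const x).smul_const (g' x))).hasDerivWithinAt
        using 1
      · rfl
      · rw [one_smul]
    simpa [Real.norm_of_nonneg hh.le, sub_sub, add_comm] using
      (convex_Icc x (x + h)).norm_image_sub_le_of_norm_hasDerivWithin_le hderiv hlip hx hxh
  calc h * ‖g' x‖ = ‖(g (x + h) - g x) - (g (x + h) - g x - h • g' x)‖ := by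
        rw [sub_sub_cancel, norm_smul, Real.norm_of_nonneg hh.le]
    _ ≤ ‖g (x + h)‖ + ‖g x‖ + M * h * h := norm_sub_le_of_le (norm_sub_le _ _) hrem
    _ ≤ 2 * S + M * h ^ 2 := by linarith [hS _ hxh, hS x hx]

theorem IsNegligibleOn.deriv_of_cthickening {g g' g'' : ℝ → ℝ → F} {K : Set ℝ} {r : ℝ}
    (hr : 0 < r)
    (hderiv : ∀ᶠ ε in 𝓝[>] (0:ℝ), ∀ x ∈ Metric.cthickening r K,
      HasDerivAt (g ε) (g' ε x) x ∧ HasDerivAt (g' ε) (g'' ε x) x)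
    (hg : IsNegligibleOn g (Metric.cthickening r K))
    (hg'' : IsModerateOn g'' (Metric.cthickening r K)) : IsNegligibleOn g' K := by
  intro m
  obtain ⟨N, hN⟩ := hg''
  filter_upwards [hderiv, hg (2 * m + N + 2), hN, Ioc_mem_nhdsGT (lt_min one_pos hr),
    eventually_mul_le_one 3] with ε hd hgε hNε hε h3ε x hx
  have hε0 : 0 < ε := hε.1
  have hε1 : ε ≤ 1 := hε.2.trans (min_le_left _ _)
  -- the step `h` is chosen so that both error terms are `O(ε ^ (2 * m + N + 2))`
  set h := ε ^ (m + N + 1) with hh_def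
  have hh : 0 < h := by positivity
  have hseg : Icc x (x + h) ⊆ Metric.cthickening r K := fun y hy =>
    Metric.mem_cthickening_of_dist_le y x r K hx <| by
      rw [Real.dist_eq, abs_of_nonneg (by linarith [hy.1])]
      calc y - x ≤ ε ^ (m + N + 1) := by linarith [hy.2]
        _ ≤ ε ^ 1 := pow_le_pow_of_le_one hε0.le hε1 (by omega)
        _ ≤ r := (pow_one ε).symm ▸ hε.2.trans (min_le_right _ _)
  have key := mul_norm_deriv_le_of_bounds hh (fun y hy => (hd y (hseg hy)).1)
    (fun y hy => (hd y (hseg hy)).2) (fun y hy => hgε y (hseg hy)) (M := 1 / ε ^ N)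
    (fun y hy => (le_div_iff₀ (by positivity)).2 (hNε y (hseg hy)))
  have hM : 1 / ε ^ N * h ^ 2 = ε ^ (2 * m + N + 2) := by
    rw [hh_def, ← pow_mul, div_mul_eq_mul_div, one_mul, div_eq_iff (by positivity), ← pow_add]
    ring_nf
  refine le_of_mul_le_mul_left ?_ hh
  calc h * ‖g' ε x‖ ≤ 2 * ε ^ (2 * m + N + 2) + ε ^ (2 * m + N + 2) := hM ▸ key
    _ = 3 * ε * (h * ε ^ m) := by rw [hh_def]; ring
    _ ≤ h * ε ^ m := mul_le_of_le_one_left (by positivity) h3ε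

theorem ContDiffOn.hasDerivAt_iteratedDerivWithin {f : ℝ → F} {s : Set ℝ}
    (hf : ContDiffOn ℝ (⊤:ℕ∞) f s) (hs : IsOpen s) {x : ℝ} (hx : x ∈ s) (n : ℕ) :
    HasDerivAt (iteratedDerivWithin n f s) (iteratedDerivWithin (n + 1) f s x) x := by
  have hd := hf.differentiableOn_iteratedDerivWithin (m := n)
    (by exact_mod_cast ENat.natCast_lt_top n) hs.uniqueDiffOn x hx
  rw [iteratedDerivWithin_succ, derivWithin_of_isOpen hs hx]
  exact (hd.differentiableAt (hs.mem_nhds hx)).hasDerivAt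

theorem IsModerate.isNegligible {Ω : Set ℝ} (hΩ : IsOpen Ω) {w : ℝ → ℝ → F}
    (hw : IsModerate Ω w) (h0 : ∀ K, IsCompact K → K ⊆ Ω → IsNegligibleOn w K) :
    IsNegligible Ω w := by
  have hnorm : ∀ n ε x, ‖iteratedFDerivWithin ℝ n (w ε) Ω x‖ =
      ‖iteratedDerivWithin n (w ε) Ω x‖ := fun _ _ _ =>
    norm_iteratedFDerivWithin_eq_norm_iteratedDerivWithin
  have hderiv : ∀ᶠ ε in 𝓝[>] (0:ℝ), ∀ n, ∀ x ∈ Ω,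
      HasDerivAt (iteratedDerivWithin n (w ε) Ω) (iteratedDerivWithin (n + 1) (w ε) Ω x) x := by
    filter_upwards [Ioc_mem_nhdsGT one_pos] with ε hε n x hx
    exact (hw.1 ε hε).hasDerivAt_iteratedDerivWithin hΩ hx n
  have hneg : ∀ n K, IsCompact K → K ⊆ Ω →
      IsNegligibleOn (fun ε => iteratedDerivWithin n (w ε) Ω) K := by
    intro n
    induction n with
    | zero => simpa only [iteratedDerivWithin_zero] using h0
    | succ n ih =>
      intro K hK hKΩ
      obtain ⟨r, hr, hrΩ⟩ := hK.exists_cthickening_subset_open hΩ hKΩ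
      refine .deriv_of_cthickening hr ?_ (ih _ hK.cthickening hrΩ)
        ((hw.isModerateOn hK.cthickening hrΩ (n + 2)).congr_norm
          (.of_forall fun ε x _ => hnorm _ _ _))
      filter_upwards [hderiv] with ε hε x hx using ⟨hε n x (hrΩ hx), hε (n + 1) x (hrΩ hx)⟩
  exact .of_isNegligibleOn hw.1 fun K hK hKΩ n =>
    (hneg n K hK hKΩ).congr_norm (.of_forall fun ε x _ => (hnorm n ε x).symm)

theorem isNegligibleOn_sub_of_shift_one_goldenRatio {f f' : ℝ → ℝ → F} {A B t₀ : ℝ}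
    (hAB : 3 ≤ B - A) (ht₀ : t₀ ∈ Icc A B)
    (h1 : IsNegligibleOn (fun ε t => f ε (t + 1) - f ε t) (Icc A B))
    (hφ : IsNegligibleOn (fun ε t => f ε (t + φ) - f ε t) (Icc A B))
    (hf : ∀ᶠ ε in 𝓝[>] (0:ℝ), ∀ t ∈ Icc A B, HasDerivWithinAt (f ε) (f' ε t) (Icc A B) t)
    (hf' : IsModerateOn f' (Icc A B)) :
    IsNegligibleOn (fun ε t => f ε t - f ε t₀) (Icc A B) := by
  intro m
  obtain ⟨N, hN⟩ := hf'
  -- grid mesh `δ = ε ^ (N + m + 1)` against shift errors `D = ε ^ (2 * (N + m + 1) + m + 1)`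
  filter_upwards [h1 (2 * (N + m + 1) + m + 1), hφ (2 * (N + m + 1) + m + 1), hf, hN,
    Ioc_mem_nhdsGT one_pos, eventually_mul_le_one (1 + 8 * (B - A))] with ε h1ε hφε hfε hNε hε hCε
    t ht
  have hε0 : 0 < ε := hε.1
  have hLip : ∀ x ∈ Icc A B, ∀ y ∈ Icc A B, ‖f ε y - f ε x‖ ≤ 1 / ε ^ N * |y - x| :=
    fun x hx y hy => by
      simpa [Real.norm_eq_abs] using (convex_Icc A B).norm_image_sub_le_of_norm_hasDerivWithin_le
        hfε (fun z hz => (le_div_iff₀ (by positivity)).2 (hNε z hz)) hx hy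
  calc ‖f ε t - f ε t₀‖
      ≤ 1 / ε ^ N * ε ^ (N + m + 1) + 8 * (B - A) * ε ^ (2 * (N + m + 1) + m + 1) /
          (ε ^ (N + m + 1)) ^ 2 :=
        norm_sub_le_of_shiftBound_one_goldenRatio (fun t ht _ => h1ε t ht)
          (fun t ht _ => hφε t ht) (by positivity) hAB (by positivity) hLip (by positivity)
          (pow_le_one₀ hε0.le hε.2) ht₀ ht
    _ = (1 + 8 * (B - A)) * ε * ε ^ m := by field_simp; ring
    _ ≤ ε ^ m := mul_le_of_le_one_left (by positivity) hCε

def logPullback (α : ℝ) (g : ℝ → ℂ) (t : ℝ) : ℂ := (exp (-α * t) : ℂ) * g (exp t)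

theorem logPullback_add_sub (α : ℝ) (g : ℝ → ℂ) (s t : ℝ) :
    logPullback α g (t + s) - logPullback α g t =
      (exp (-α * (t + s)) : ℂ) * (g (exp s * exp t) - ((exp s ^ α : ℝ) : ℂ) * g (exp t)) := by
  have h : exp (-α * (t + s)) * exp s ^ α = exp (-α * t) := by
    rw [← exp_mul, ← exp_add]; ring_nf
  rw [logPullback, logPullback, ← exp_add, add_comm s t, mul_sub, ← mul_assoc,
    ← Complex.ofReal_mul, h]

theorem hasDerivAt_logPullback (α : ℝ) {g : ℝ → ℂ} {t : ℝ} (hg : DifferentiableAt ℝ g (exp t)) :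
    HasDerivAt (logPullback α g) (((exp (-α * t) * -α : ℝ) : ℂ) * g (exp t) +
      ((exp (-α * t) * exp t : ℝ) : ℂ) * deriv g (exp t)) t := by
  have hexp : HasDerivAt (fun y => (exp (-α * y) : ℂ)) ((exp (-α * t) * -α : ℝ) : ℂ) t := by
    simpa using (((hasDerivAt_id t).const_mul (-α)).exp).ofReal_comp
  refine (hexp.mul (hg.hasDerivAt.scomp t (hasDerivAt_exp t))).congr_deriv ?_
  simp only [Function.comp_apply, Complex.real_smul, Complex.ofReal_mul]
  ring

theorem rpow_mul_logPullback_log_sub (α : ℝ) (g : ℝ → ℂ) {x : ℝ} (hx : 0 < x) :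
    ((x ^ α : ℝ) : ℂ) * (logPullback α g (log x) - logPullback α g 0) =
      g x - g 1 * ((x ^ α : ℝ) : ℂ) := by
  have h : x ^ α * exp (-α * log x) = 1 := by
    rw [mul_comm (-α), exp_mul, exp_log hx, ← rpow_add hx, add_neg_cancel, rpow_zero]
  simp only [logPullback, mul_zero, exp_zero, exp_log hx, Complex.ofReal_one, one_mul]
  rw [mul_sub, ← mul_assoc, ← Complex.ofReal_mul, h, Complex.ofReal_one, one_mul, mul_comm]

theorem IsModerate.isModerateOn_deriv {Ω K : Set ℝ} (hΩ : IsOpen Ω) {u : ℝ → ℝ → F}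
    (hu : IsModerate Ω u) (hK : IsCompact K) (hKΩ : K ⊆ Ω) :
    IsModerateOn (fun ε => deriv (u ε)) K :=
  (hu.isModerateOn hK hKΩ 1).congr_norm <| .of_forall fun _ x hx => by
    rw [norm_iteratedFDerivWithin_eq_norm_iteratedDerivWithin, iteratedDerivWithin_one,
      derivWithin_of_isOpen hΩ (hKΩ hx)]

section Homogeneous

variable {α : ℝ} {u : ℝ → ℝ → ℂ}

theorem isNegligibleOn_logPullback_shift
    (hhom : ∀ lam : ℝ, 0 < lam → IsNegligible (Ioi 0)
      (fun ε x => u ε (lam * x) - ((lam ^ α : ℝ) : ℂ) * u ε x)) (A B s : ℝ) :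
    IsNegligibleOn (fun ε t => logPullback α (u ε) (t + s) - logPullback α (u ε) t) (Icc A B) := by
  have hK : IsCompact (exp '' Icc A B) := isCompact_Icc.image continuous_exp
  have hhom_s := ((hhom (exp s) (exp_pos s)).isNegligibleOn hK
    (image_subset_iff.2 fun t _ => exp_pos t)).comp (mapsTo_image exp (Icc A B))
  have hfactor : ContinuousOn (fun t => (exp (-α * (t + s)) : ℂ)) (Icc A B) := by fun_prop
  exact (IsNegligibleOn.smul (hfactor.isModerateOn isCompact_Icc) hhom_s).congr_norm
    (.of_forall fun ε t _ => by rw [logPullback_add_sub, smul_eq_mul])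

theorem isModerateOn_deriv_logPullback (hu : IsModerate (Ioi 0) u) (A B : ℝ) :
    IsModerateOn (fun ε t => ((exp (-α * t) * -α : ℝ) : ℂ) * u ε (exp t) +
      ((exp (-α * t) * exp t : ℝ) : ℂ) * deriv (u ε) (exp t)) (Icc A B) := by
  have hK : IsCompact (exp '' Icc A B) := isCompact_Icc.image continuous_exp
  have hK0 : exp '' Icc A B ⊆ Ioi 0 := image_subset_iff.2 fun t _ => exp_pos t
  have hexp := mapsTo_image exp (Icc A B)
  have hu0 := ((hu.isModerateOn hK hK0 0).congr_norm
    (.of_forall fun _ _ _ => norm_iteratedFDerivWithin_zero)).comp hexp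
  have hu1 := (hu.isModerateOn_deriv isOpen_Ioi hK hK0).comp hexp
  have ha : ContinuousOn (fun t => ((exp (-α * t) * -α : ℝ) : ℂ)) (Icc A B) := by fun_prop
  have hb : ContinuousOn (fun t => ((exp (-α * t) * exp t : ℝ) : ℂ)) (Icc A B) := by fun_prop
  exact ((ha.isModerateOn isCompact_Icc).smul hu0).add ((hb.isModerateOn isCompact_Icc).smul hu1)

theorem isNegligibleOn_sub_mul_rpow (hu : IsModerate (Ioi 0) u)
    (hhom : ∀ lam : ℝ, 0 < lam → IsNegligible (Ioi 0)
      (fun ε x => u ε (lam * x) - ((lam ^ α : ℝ) : ℂ) * u ε x))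
    {K : Set ℝ} (hK : IsCompact K) (hK0 : K ⊆ Ioi 0) :
    IsNegligibleOn (fun ε x => u ε x - u ε 1 * ((x ^ α : ℝ) : ℂ)) K := by
  obtain ⟨R, hR⟩ := hK.exists_bound_of_continuousOn
    (continuousOn_log.mono fun x hx => (ne_of_gt (hK0 hx) : x ≠ 0))
  set B := |R| + 2
  have hlog : MapsTo log K (Icc (-B) B) := fun x hx =>
    abs_le.1 ((Real.norm_eq_abs _ ▸ hR x hx).trans (by linarith [le_abs_self R]))
  have hderiv : ∀ᶠ ε in 𝓝[>] (0:ℝ), ∀ t ∈ Icc (-B) B, HasDerivWithinAt (logPullback α (u ε))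
      (((exp (-α * t) * -α : ℝ) : ℂ) * u ε (exp t) +
        ((exp (-α * t) * exp t : ℝ) : ℂ) * deriv (u ε) (exp t)) (Icc (-B) B) t := by
    filter_upwards [Ioc_mem_nhdsGT one_pos] with ε hε t _
    exact (hasDerivAt_logPullback α (((hu.1 ε hε).contDiffAt
      (isOpen_Ioi.mem_nhds (exp_pos t))).differentiableAt (by simp))).hasDerivWithinAt
  have hconst := isNegligibleOn_sub_of_shift_one_goldenRatio (t₀ := 0) (by linarith [abs_nonneg R])
    ⟨by linarith [abs_nonneg R], by linarith [abs_nonneg R]⟩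
    (isNegligibleOn_logPullback_shift hhom _ _ 1) (isNegligibleOn_logPullback_shift hhom _ _ φ)
    hderiv (isModerateOn_deriv_logPullback hu _ _)
  have hrpow : ContinuousOn (fun x => ((x ^ α : ℝ) : ℂ)) K :=
    Complex.continuous_ofReal.comp_continuousOn
      (continuousOn_id.rpow_const fun x hx => .inl (ne_of_gt (hK0 hx)))
  exact (IsNegligibleOn.smul (hrpow.isModerateOn hK) (hconst.comp hlog)).congr_norm
    (.of_forall fun ε x hx => by rw [smul_eq_mul, rpow_mul_logPullback_log_sub α _ (hK0 hx)])

end Homogeneous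

/-- a generalized function on ℝ⁺ homogeneous of degree `α` equals `c·x^α`
for some generalized complex number `c`. -/
theorem statement_5
    (α : ℝ) (u : ℝ → ℝ → ℂ)
    (hu : IsModerate (Set.Ioi (0:ℝ)) u)
    (hhom : ∀ lam : ℝ, 0 < lam →
      IsNegligible (Set.Ioi (0:ℝ))
        (fun ε x => u ε (lam * x) - ((lam ^ α : ℝ) : ℂ) * u ε x)) :
    ∃ c : ℝ → ℂ, NumModerate c ∧
      IsNegligible (Set.Ioi (0:ℝ))
        (fun ε x => u ε x - c ε * ((x ^ α : ℝ) : ℂ)) := by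
  have hc : NumModerate fun ε => u ε 1 := hu.numModerate (mem_Ioi.2 one_pos)
  have hrpow : ContDiffOn ℝ (⊤:ℕ∞) (fun x : ℝ => ((x ^ α : ℝ) : ℂ)) (Ioi 0) := fun x hx =>
    (Complex.ofRealCLM.contDiff.contDiffAt.comp x
      (contDiffAt_rpow_const_of_ne (ne_of_gt hx))).contDiffWithinAt
  exact ⟨_, hc, (hu.sub_mul isOpen_Ioi.uniqueDiffOn hc hrpow).isNegligible isOpen_Ioi
    fun K hK hK0 => isNegligibleOn_sub_mul_rpow hu hhom hK hK0⟩
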